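/- Under assumptions (A1), (A2), (A3), the sum Σ_{k=1}^{K} f(s_k), where s_k is a maximizer of f(s) over s ∈ S(G_{k-1}), satisfies Σ_{k=1}^{K} f(s_k) ≤ α_G·f(G_K) + (1−α_G)·f(g_1). -/
import Mathlib


/-- `T` is a prefix-closed collection of strings. -/
def PrefixClosed {σ : Type*} (T : Set (List σ)) : Prop :=
  ∀ B ∈ T, ∀ A : List σ, A <+: B → A ∈ T

/-- `G` is a greedy solution of length `K` for maximizing `f` over `T`. -/
def IsGreedy {σ : Type*} (f : List σ → ℝ) (T : Set (List σ)) (G : List σ) (K : ℕ) : Prop :=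
  G.length = K ∧ G ∈ T ∧
    ∀ k, 1 ≤ k → k ≤ K → ∀ s : σ, G.take (k - 1) ++ [s] ∈ T →
      f (G.take (k - 1) ++ [s]) ≤ f (G.take k)

/-- The greedy curvature `α_G`: the maximum over `k ∈ {2,…,K}` and feasible
continuations `s` with positive increment of `f([s]) / Δ(G_{k-1}s)`. -/
noncomputable def greedyCurvature {σ : Type*} (f : List σ → ℝ) (T : Set (List σ))
    (G : List σ) (K : ℕ) : ℝ :=
  sSup { r : ℝ | ∃ k, 2 ≤ k ∧ k ≤ K ∧ ∃ s : σ, G.take (k - 1) ++ [s] ∈ T ∧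
    0 < f (G.take (k - 1) ++ [s]) - f (G.take (k - 1)) ∧
    r = f [s] / (f (G.take (k - 1) ++ [s]) - f (G.take (k - 1))) }

/-- `max_{s ∈ S(G_{k-1})} f(s)`: the best single-symbol value among feasible
continuations of the greedy prefix of length `k - 1`. -/
noncomputable def maxStep {σ : Type*} (f : List σ → ℝ) (T : Set (List σ))
    (G : List σ) (k : ℕ) : ℝ :=
  sSup { r : ℝ | ∃ s : σ, G.take (k - 1) ++ [s] ∈ T ∧ r = f [s] }

private lemma tele_sum (g : ℕ → ℝ) (K : ℕ) (hK : 1 ≤ K) :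
    ∑ k ∈ Finset.Icc 2 K, (g k - g (k - 1)) = g K - g 1 := by
  induction K with
  | zero => omega
  | succ n ih =>
    rcases Nat.lt_or_ge n 1 with h | h
    · interval_cases n
      simp
    · rw [Finset.sum_Icc_succ_top (by omega), ih h]
      simp only [Nat.add_sub_cancel]
      ring

/-- under assumptions A1, A2 and A3, with `s k` a maximizer of the
single-symbol value over the feasible continuations of the greedy prefix `G_{k-1}`,
`Σ_{k=1}^K f(s_k) ≤ α_G·f(G_K) + (1 − α_G)·f(g_1)`. -/
theorem sum_maximizers_le {σ : Type*} [Fintype σ] (K : ℕ) (hK : 1 ≤ K)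
    (T : Set (List σ)) (hT : PrefixClosed T) (hTlen : ∀ A ∈ T, A.length ≤ K)
    (f : List σ → ℝ) (hf0 : f ([] : List σ) = 0) (hfnonneg : ∀ A ∈ T, 0 ≤ f A)
    (G : List σ) (hG : IsGreedy f T G K)
    (O : List σ) (hOT : O ∈ T) (hOlen : O.length = K)
    (hOopt : ∀ A ∈ T, f A ≤ f O) (hOpos : 0 < f O)
    -- A1: each optimal symbol is feasible after the corresponding greedy prefix
    (hA1 : ∀ k (hk : 1 ≤ k) (hkK : k ≤ K),
      G.take (k - 1) ++ [O.get ⟨k - 1, by omega⟩] ∈ T)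
    -- A2: diminishing returns along the optimal string
    (hA2 : ∀ k (hk : 1 ≤ k) (hkK : k ≤ K),
      f (O.take k) - f (O.take (k - 1)) ≤ f [O.get ⟨k - 1, by omega⟩])
    -- A3: all feasible increments along the greedy trajectory are positive
    (hA3 : ∀ k (hk : 1 ≤ k) (hkK : k ≤ K), ∀ s : σ, G.take (k - 1) ++ [s] ∈ T →
      0 < f (G.take (k - 1) ++ [s]) - f (G.take (k - 1)))
    -- s k is a maximizer of f over the feasible continuations S(G_{k-1})
    (s : ℕ → σ)
    (hsfeas : ∀ k, 1 ≤ k → k ≤ K → G.take (k - 1) ++ [s k] ∈ T)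
    (hsmax : ∀ k, 1 ≤ k → k ≤ K → ∀ s' : σ, G.take (k - 1) ++ [s'] ∈ T →
      f [s'] ≤ f [s k]) :
    ∑ k ∈ Finset.Icc 1 K, f [s k] ≤
      greedyCurvature f T G K * f G + (1 - greedyCurvature f T G K) * f (G.take 1) := by
  classical
  set α := greedyCurvature f T G K with hαdef
  set D := { r : ℝ | ∃ k, 2 ≤ k ∧ k ≤ K ∧ ∃ s : σ, G.take (k - 1) ++ [s] ∈ T ∧
    0 < f (G.take (k - 1) ++ [s]) - f (G.take (k - 1)) ∧
    r = f [s] / (f (G.take (k - 1) ++ [s]) - f (G.take (k - 1))) } with hDdef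
  have hαD : α = sSup D := rfl
  have hDbdd : BddAbove D := by
    apply Set.Finite.bddAbove
    apply Set.Finite.subset (Set.Finite.image
      (fun p : ℕ × σ => f [p.2] / (f (G.take (p.1 - 1) ++ [p.2]) - f (G.take (p.1 - 1))))
      ((Set.finite_Icc 2 K).prod Set.finite_univ))
    rintro r ⟨k, hk2, hkK, s', hs'T, hpos, rfl⟩
    exact ⟨(k, s'), ⟨⟨hk2, hkK⟩, trivial⟩, rfl⟩
  -- first greedy step bounds f [s 1]
  have hs1 : f [s 1] ≤ f (G.take 1) := by
    have h := hG.2.2 1 le_rfl hK (s 1) (by simpa using hsfeas 1 le_rfl hK)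
    simpa using h
  rcases eq_or_lt_of_le hK with hK1 | hK2
  · -- K = 1
    have hG1 : G.take 1 = G := by
      rw [show (1 : ℕ) = G.length by rw [hG.1, ← hK1], List.take_length]
    rw [← hK1, Finset.Icc_self, Finset.sum_singleton, hG1]
    nlinarith [hs1, hG1 ▸ hs1]
  · -- K ≥ 2
    have hK2' : 2 ≤ K := hK2
    -- α is nonnegative
    have hαnn : 0 ≤ α := by
      by_contra hneg
      push_neg at hneg
      have hall : ∀ k ∈ Finset.Icc 2 K,
          f (O.take k) - f (O.take (k - 1)) < 0 := by
        intro k hk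
        rw [Finset.mem_Icc] at hk
        obtain ⟨hk2, hkK⟩ := hk
        have hk1 : 1 ≤ k := by omega
        have hkO : k - 1 < O.length := by omega
        have hfeas := hA1 k hk1 hkK
        have hpos := hA3 k hk1 hkK _ hfeas
        have hmem : f [O.get ⟨k - 1, hkO⟩] /
            (f (G.take (k - 1) ++ [O.get ⟨k - 1, hkO⟩]) - f (G.take (k - 1))) ∈ D :=
          ⟨k, hk2, hkK, _, hfeas, hpos, rfl⟩
        have hle : f [O.get ⟨k - 1, hkO⟩] /
            (f (G.take (k - 1) ++ [O.get ⟨k - 1, hkO⟩]) - f (G.take (k - 1))) ≤ α := by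
          rw [hαD]; exact le_csSup hDbdd hmem
        have hOkneg : f [O.get ⟨k - 1, hkO⟩] < 0 := by
          by_contra hge
          push_neg at hge
          have : (0 : ℝ) ≤ f [O.get ⟨k - 1, hkO⟩] /
              (f (G.take (k - 1) ++ [O.get ⟨k - 1, hkO⟩]) - f (G.take (k - 1))) :=
            div_nonneg hge hpos.le
          linarith
        calc f (O.take k) - f (O.take (k - 1)) ≤ f [O.get ⟨k - 1, hkO⟩] := hA2 k hk1 hkK
          _ < 0 := hOkneg
      have hsumneg : ∑ k ∈ Finset.Icc 2 K, (f (O.take k) - f (O.take (k - 1))) < 0 :=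
        Finset.sum_neg hall (by rw [Finset.nonempty_Icc]; omega)
      rw [tele_sum (fun k => f (O.take k)) K hK] at hsumneg
      have hOK : O.take K = O := by
        rw [← hOlen, List.take_length]
      have hO1T : O.take 1 ∈ T := hT O hOT _ (List.take_prefix 1 O)
      have := hOopt _ hO1T
      rw [hOK] at hsumneg
      linarith
    -- per-step bound for k ≥ 2
    have hstep : ∀ k ∈ Finset.Icc 2 K,
        f [s k] ≤ α * (f (G.take k) - f (G.take (k - 1))) := by
      intro k hk
      rw [Finset.mem_Icc] at hk
      obtain ⟨hk2, hkK⟩ := hk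
      have hk1 : 1 ≤ k := by omega
      have hfeas := hsfeas k hk1 hkK
      have hpos := hA3 k hk1 hkK _ hfeas
      have hmem : f [s k] / (f (G.take (k - 1) ++ [s k]) - f (G.take (k - 1))) ∈ D :=
        ⟨k, hk2, hkK, _, hfeas, hpos, rfl⟩
      have hle : f [s k] / (f (G.take (k - 1) ++ [s k]) - f (G.take (k - 1))) ≤ α := by
        rw [hαD]; exact le_csSup hDbdd hmem
      have h1 : f [s k] ≤ α * (f (G.take (k - 1) ++ [s k]) - f (G.take (k - 1))) :=
        (div_le_iff₀ hpos).mp hle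
      have hgr : f (G.take (k - 1) ++ [s k]) ≤ f (G.take k) := hG.2.2 k hk1 hkK _ hfeas
      nlinarith
    have hsplit : Finset.Icc 1 K = insert 1 (Finset.Icc 2 K) := by
      ext x
      simp only [Finset.mem_Icc, Finset.mem_insert]
      omega
    rw [hsplit, Finset.sum_insert (by simp)]
    have hsum2 : ∑ k ∈ Finset.Icc 2 K, f [s k] ≤
        α * (f (G.take K) - f (G.take 1)) := by
      calc ∑ k ∈ Finset.Icc 2 K, f [s k]
          ≤ ∑ k ∈ Finset.Icc 2 K, α * (f (G.take k) - f (G.take (k - 1))) :=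
            Finset.sum_le_sum hstep
        _ = α * ∑ k ∈ Finset.Icc 2 K, (f (G.take k) - f (G.take (k - 1))) := by
            rw [Finset.mul_sum]
        _ = α * (f (G.take K) - f (G.take 1)) := by
            rw [tele_sum (fun k => f (G.take k)) K hK]
    have hGK : G.take K = G := by rw [← hG.1, List.take_length]
    rw [hGK] at hsum2
    linarith
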